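/- Let μ = 1/4. (a) If u is a small local sub-harmonic of L_{1/4} then limsup_{δ(x)→0} u(x)/δ(x)^{1/2} < ∞. (b) If U is a large local sub-harmonic of L_{1/4} then limsup_{δ(x)→0} U(x)/(δ(x)^{1/2}·log(1/δ(x))) > 0. -/

import Mathlib

open Set Metric MeasureTheory Real

noncomputable section

/-- Distance to the boundary of `Ω`. -/
def bdist {N : ℕ} (Ω : Set (EuclideanSpace ℝ (Fin N))) (x : EuclideanSpace ℝ (Fin N)) : ℝ :=
  Metric.infDist x Ωᶜ

/-- The collar `Ω_ρ = {x ∈ Ω : δ(x) < ρ}`. -/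
def collar {N : ℕ} (Ω : Set (EuclideanSpace ℝ (Fin N))) (ρ : ℝ) :
    Set (EuclideanSpace ℝ (Fin N)) :=
  {x ∈ Ω | bdist Ω x < ρ}

/-- The ring `Ω_{ε,ρ} = {x ∈ Ω : ε < δ(x) < ρ}`. -/
def ring' {N : ℕ} (Ω : Set (EuclideanSpace ℝ (Fin N))) (ε ρ : ℝ) :
    Set (EuclideanSpace ℝ (Fin N)) :=
  {x ∈ Ω | ε < bdist Ω x ∧ bdist Ω x < ρ}

/-- The Laplacian. -/
def lap {N : ℕ} (f : EuclideanSpace ℝ (Fin N) → ℝ) (x : EuclideanSpace ℝ (Fin N)) : ℝ :=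
  ∑ i : Fin N, fderiv ℝ (fun y => fderiv ℝ f y (EuclideanSpace.single i 1)) x
    (EuclideanSpace.single i 1)

/-- `ρ₀` is a good collar width: `δ` is `C²` on `Ω_{ρ₀}`, `|∇δ| = 1` there, `Δδ` bounded. -/
def GoodCollar {N : ℕ} (Ω : Set (EuclideanSpace ℝ (Fin N))) (ρ₀ : ℝ) : Prop :=
  0 < ρ₀ ∧ ContDiffOn ℝ 2 (bdist Ω) (collar Ω ρ₀) ∧
    (∀ x ∈ collar Ω ρ₀, ‖gradient (bdist Ω) x‖ = 1) ∧
    ∃ M, ∀ x ∈ collar Ω ρ₀, |lap (bdist Ω) x| ≤ M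

/-- A super-harmonic of `L_μ = -Δ - μ/δ²` on `G`. -/
def SuperHarm {N : ℕ} (Ω : Set (EuclideanSpace ℝ (Fin N))) (μ : ℝ)
    (G : Set (EuclideanSpace ℝ (Fin N))) (h : EuclideanSpace ℝ (Fin N) → ℝ) : Prop :=
  ContDiffOn ℝ 2 h G ∧ ∀ x ∈ G, 0 ≤ -(lap h x) - μ / (bdist Ω x) ^ 2 * h x

/-- A sub-harmonic of `L_μ = -Δ - μ/δ²` on `G`. -/
def SubHarm {N : ℕ} (Ω : Set (EuclideanSpace ℝ (Fin N))) (μ : ℝ)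
    (G : Set (EuclideanSpace ℝ (Fin N))) (h : EuclideanSpace ℝ (Fin N) → ℝ) : Prop :=
  ContDiffOn ℝ 2 h G ∧ ∀ x ∈ G, -(lap h x) - μ / (bdist Ω x) ^ 2 * h x ≤ 0

/-- A positive local super-harmonic of `L_μ`, defined on the collar `Ω_σ`. -/
def PosSuperHarmOn {N : ℕ} (Ω : Set (EuclideanSpace ℝ (Fin N))) (μ σ : ℝ)
    (h : EuclideanSpace ℝ (Fin N) → ℝ) : Prop :=
  SuperHarm Ω μ (collar Ω σ) h ∧ ∀ x ∈ collar Ω σ, 0 < h x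

/-- A sub-solution of `(*)`: `-Δu - (μ/δ²)u + u^p/δ^s = 0` on `G`. -/
def SubSol {N : ℕ} (Ω : Set (EuclideanSpace ℝ (Fin N))) (μ s p : ℝ)
    (G : Set (EuclideanSpace ℝ (Fin N))) (u : EuclideanSpace ℝ (Fin N) → ℝ) : Prop :=
  ContDiffOn ℝ 2 u G ∧ (∀ x ∈ G, 0 ≤ u x) ∧
    ∀ x ∈ G, -(lap u x) - μ / (bdist Ω x) ^ 2 * u x + (u x) ^ p / (bdist Ω x) ^ s ≤ 0

/-- A super-solution of `(*)` on `G`. -/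
def SuperSol {N : ℕ} (Ω : Set (EuclideanSpace ℝ (Fin N))) (μ s p : ℝ)
    (G : Set (EuclideanSpace ℝ (Fin N))) (u : EuclideanSpace ℝ (Fin N) → ℝ) : Prop :=
  ContDiffOn ℝ 2 u G ∧ (∀ x ∈ G, 0 < u x) ∧
    ∀ x ∈ G, 0 ≤ -(lap u x) - μ / (bdist Ω x) ^ 2 * u x + (u x) ^ p / (bdist Ω x) ^ s

/-- A regularized distance `(d, c)` on `Ω`. -/
def RegDist {N : ℕ} (Ω : Set (EuclideanSpace ℝ (Fin N))) (d : EuclideanSpace ℝ (Fin N) → ℝ)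
    (c : ℝ) : Prop :=
  1 ≤ c ∧ ContDiffOn ℝ 2 d Ω ∧ (∀ x ∈ Ω, 0 < d x) ∧
    (∀ x ∈ Ω, c⁻¹ * bdist Ω x ≤ d x ∧ d x ≤ c * bdist Ω x) ∧
    (∀ x ∈ Ω, ‖gradient d x‖ ≤ c) ∧ (∀ x ∈ Ω, |lap d x| ≤ c / d x)

/-- A local sub-harmonic `u` (defined on `Ω_ρ`) is *small* if
`limsup_{δ(x)→0} u(x)/h(x) < ∞` for every positive local super-harmonic `h` of `L_μ`. -/
def SmallSubHarm {N : ℕ} (Ω : Set (EuclideanSpace ℝ (Fin N))) (μ : ℝ)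
    (u : EuclideanSpace ℝ (Fin N) → ℝ) (ρ : ℝ) : Prop :=
  ∀ σ, 0 < σ → ∀ h : EuclideanSpace ℝ (Fin N) → ℝ, PosSuperHarmOn Ω μ σ h →
    ∃ C : ℝ, ∃ τ, 0 < τ ∧ τ ≤ min ρ σ ∧ ∀ x ∈ collar Ω τ, u x / h x ≤ C

/-- A local sub-harmonic `u` (defined on `Ω_ρ`) is *large* if
`limsup_{δ(x)→0} u(x)/h(x) > 0` for every positive local super-harmonic `h` of `L_μ`. -/
def LargeSubHarm {N : ℕ} (Ω : Set (EuclideanSpace ℝ (Fin N))) (μ : ℝ)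
    (u : EuclideanSpace ℝ (Fin N) → ℝ) (ρ : ℝ) : Prop :=
  ∀ σ, 0 < σ → ∀ h : EuclideanSpace ℝ (Fin N) → ℝ, PosSuperHarmOn Ω μ σ h →
    ∃ c, 0 < c ∧ ∀ τ, 0 < τ → τ ≤ min ρ σ → ∃ x ∈ collar Ω τ, c ≤ u x / h x

/-!
Both `t ^ (1/2)` and `t ^ (1/2) * log (1/t)` solve the Euler equation `φ'' + φ / (4 t²) = 0`.
Subtracting `t ^ (3/4)` leaves the positive remainder `t ^ (-5/4) / 16` in `-φ'' - φ / (4 t²)`,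
which near `t = 0` dominates the first-order term `φ'(δ) Δδ` produced by the curvature of the
boundary. Hence `h₁ = δ^{1/2} - δ^{3/4}` and `h₂ = δ^{1/2} log (1/δ) - δ^{3/4}` are positive local
super-harmonics of `L_{1/4}`. Since `h₁ ≤ δ^{1/2}` and `δ^{1/2} log (1/δ) ≤ 2 h₂` near the boundary,
(a) and (b) follow by testing smallness against `h₁` and largeness against `h₂`.
-/

open Filter Topology

lemma Bornology.IsBounded.nonempty_compl {E : Type*} [NormedAddCommGroup E] [NormedSpace ℝ E]
    [Nontrivial E] {s : Set E} (hs : Bornology.IsBounded s) : sᶜ.Nonempty :=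
  Set.nonempty_compl.2 fun h => NormedSpace.unbounded_univ ℝ E (h ▸ hs)

section Collar

variable {N : ℕ} {Ω : Set (EuclideanSpace ℝ (Fin N))}

lemma isOpen_collar (hΩ : IsOpen Ω) (ρ : ℝ) : IsOpen (collar Ω ρ) :=
  hΩ.inter (isOpen_Iio.preimage (continuous_infDist_pt _))

lemma collar_subset_collar {σ ρ : ℝ} (h : σ ≤ ρ) : collar Ω σ ⊆ collar Ω ρ :=
  fun _ hx => ⟨hx.1, hx.2.trans_le h⟩

lemma bdist_pos (hΩ : IsOpen Ω) (hΩc : Ωᶜ.Nonempty) {x : EuclideanSpace ℝ (Fin N)}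
    (hx : x ∈ Ω) : 0 < bdist Ω x :=
  (hΩ.isClosed_compl.notMem_iff_infDist_pos hΩc).mp (not_not_intro hx)

lemma bdist_mem_Ioo_of_mem_collar (hΩ : IsOpen Ω) (hΩc : Ωᶜ.Nonempty) {σ : ℝ}
    {x : EuclideanSpace ℝ (Fin N)} (hx : x ∈ collar Ω σ) : bdist Ω x ∈ Ioo 0 σ :=
  ⟨bdist_pos hΩ hΩc hx.1, hx.2⟩

end Collar

section SecondDerivative

variable {E : Type*} [NormedAddCommGroup E] [NormedSpace ℝ E]

lemma fderiv_fderiv_comp_apply {f : E → ℝ} {φ : ℝ → ℝ} {x : E} (hf : ContDiffAt ℝ 2 f x)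
    (hφ : ContDiffAt ℝ 2 φ (f x)) (e : E) :
    fderiv ℝ (fun y => fderiv ℝ (fun z => φ (f z)) y e) x e
      = deriv (deriv φ) (f x) * fderiv ℝ f x e ^ 2
        + deriv φ (f x) * fderiv ℝ (fun y => fderiv ℝ f y e) x e := by
  have hfd : (fun y => fderiv ℝ (fun z => φ (f z)) y e)
      =ᶠ[𝓝 x] fun y => deriv φ (f y) * fderiv ℝ f y e := by
    filter_upwards [hf.eventually (by simp),
      hf.continuousAt.preimage_mem_nhds (hφ.eventually (by simp))] with y hfy hφy
    have hφy : ContDiffAt ℝ 2 φ (f y) := hφy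
    have hcomp := (hφy.differentiableAt two_ne_zero).hasDerivAt.comp_hasFDerivAt y
      (hfy.differentiableAt two_ne_zero).hasFDerivAt
    exact congrArg (· e) hcomp.fderiv
  have hφ' : HasFDerivAt (fun y => deriv φ (f y)) (deriv (deriv φ) (f x) • fderiv ℝ f x) x :=
    ((hφ.derivWithin (m := 1) le_rfl).differentiableAt one_ne_zero).hasDerivAt.comp_hasFDerivAt x
      (hf.differentiableAt two_ne_zero).hasFDerivAt
  have hfe : DifferentiableAt ℝ (fun y => fderiv ℝ f y e) x :=
    ((hf.fderiv_right (m := 1) le_rfl).differentiableAt one_ne_zero).clm_apply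
      (differentiableAt_const e)
  have hprod : HasFDerivAt (fun y => deriv φ (f y) * fderiv ℝ f y e)
      (deriv φ (f x) • fderiv ℝ (fun y => fderiv ℝ f y e) x
        + fderiv ℝ f x e • (deriv (deriv φ) (f x) • fderiv ℝ f x)) x :=
    hφ'.mul hfe.hasFDerivAt
  rw [hfd.fderiv_eq, hprod.fderiv]
  simp only [add_apply, smul_apply, smul_eq_mul]
  ring

end SecondDerivative

section Laplacian

variable {N : ℕ}

lemma sum_sq_fderiv_single (g : EuclideanSpace ℝ (Fin N) → ℝ) (x : EuclideanSpace ℝ (Fin N)) :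
    ∑ i : Fin N, fderiv ℝ g x (EuclideanSpace.single i 1) ^ 2 = ‖gradient g x‖ ^ 2 := by
  rw [EuclideanSpace.norm_sq_eq]
  refine Finset.sum_congr rfl fun i _ => ?_
  rw [← toDual_gradient, InnerProductSpace.toDual_apply_apply, EuclideanSpace.inner_single_right]
  simp

lemma lap_comp {f : EuclideanSpace ℝ (Fin N) → ℝ} {φ : ℝ → ℝ} {x : EuclideanSpace ℝ (Fin N)}
    (hf : ContDiffAt ℝ 2 f x) (hφ : ContDiffAt ℝ 2 φ (f x)) :
    lap (fun y => φ (f y)) x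
      = deriv (deriv φ) (f x) * ‖gradient f x‖ ^ 2 + deriv φ (f x) * lap f x := by
  simp only [lap, fderiv_fderiv_comp_apply hf hφ, Finset.sum_add_distrib, ← Finset.mul_sum,
    sum_sq_fderiv_single]

end Laplacian

def profile (A B t : ℝ) : ℝ := (A - B * log t) * t ^ (1/2 : ℝ) - t ^ (3/4 : ℝ)

section Profile

variable {t : ℝ}

lemma hasDerivAt_profile (A B : ℝ) (ht : 0 < t) :
    HasDerivAt (profile A B)
      ((((A - B * log t) / 2 - B) * t ^ (1/2 : ℝ) - 3/4 * t ^ (3/4 : ℝ)) / t) t := by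
  have hE := ((hasDerivAt_log ht.ne').const_mul B).const_sub A
  have ha := hasDerivAt_rpow_const (p := 1/2) (Or.inl ht.ne')
  have hb := hasDerivAt_rpow_const (p := 3/4) (Or.inl ht.ne')
  refine ((hE.mul ha).sub hb).congr_deriv ?_
  rw [rpow_sub_one ht.ne', rpow_sub_one ht.ne']
  field_simp
  ring

lemma deriv_deriv_profile (A B : ℝ) (ht : 0 < t) :
    deriv (deriv (profile A B)) t
      = (3/16 * t ^ (3/4 : ℝ) - (A - B * log t) / 4 * t ^ (1/2 : ℝ)) / t ^ 2 := by
  have hderiv : deriv (profile A B) =ᶠ[𝓝 t] fun s =>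
      (((A - B * log s) / 2 - B) * s ^ (1/2 : ℝ) - 3/4 * s ^ (3/4 : ℝ)) / s := by
    filter_upwards [Ioi_mem_nhds ht] with s hs using (hasDerivAt_profile A B hs).deriv
  have hE := (((hasDerivAt_log ht.ne').const_mul B).const_sub A).div_const 2
  have ha := hasDerivAt_rpow_const (p := 1/2) (Or.inl ht.ne')
  have hb := hasDerivAt_rpow_const (p := 3/4) (Or.inl ht.ne')
  rw [hderiv.deriv_eq]
  refine ((((hE.sub_const B).mul ha).sub (hb.const_mul (3/4))).div (hasDerivAt_id' t)
    ht.ne').deriv.trans ?_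
  simp only [Pi.mul_apply, Pi.sub_apply]
  rw [rpow_sub_one ht.ne', rpow_sub_one ht.ne']
  field_simp
  ring

lemma profile_euler (A B : ℝ) (ht : 0 < t) :
    -deriv (deriv (profile A B)) t - 1/4 / t ^ 2 * profile A B t
      = t ^ (3/4 : ℝ) / (16 * t ^ 2) := by
  rw [deriv_deriv_profile A B ht, profile]
  field_simp
  ring

lemma contDiffAt_profile (A B : ℝ) (ht : 0 < t) : ContDiffAt ℝ 2 (profile A B) t :=
  ((contDiffAt_const.sub (contDiffAt_const.mul (contDiffAt_log.2 ht.ne'))).mul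
    (contDiffAt_rpow_const_of_ne ht.ne')).sub (contDiffAt_rpow_const_of_ne ht.ne')

lemma rpow_quarter_pow (ht : 0 ≤ t) (n : ℕ) : (t ^ (1/4 : ℝ)) ^ n = t ^ ((n : ℝ) / 4) := by
  rw [← rpow_natCast, ← rpow_mul ht]
  ring_nf

lemma abs_deriv_profile_le {A B : ℝ} (hA : |A| ≤ 1) (hB : |B| ≤ 1) (ht : 0 < t) (ht1 : t ≤ 1) :
    |deriv (profile A B) t| ≤ 17/4 * t ^ (1/4 : ℝ) / t := by
  have hLs : |log t * t ^ (1/4 : ℝ)| ≤ 4 := by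
    have := abs_log_mul_self_rpow_lt t (1/4) ht ht1 (by norm_num)
    rw [one_div_one_div] at this
    exact this.le
  have h2 := rpow_quarter_pow ht.le 2
  have h3 := rpow_quarter_pow ht.le 3
  norm_num at h2 h3
  rw [(hasDerivAt_profile A B ht).deriv, abs_div, abs_of_pos ht, ← h2, ← h3]
  gcongr
  set s := t ^ (1/4 : ℝ)
  have hs : 0 ≤ s := rpow_nonneg ht.le _
  have hs1 : s ≤ 1 := rpow_le_one ht.le ht1 (by norm_num)
  have hEs : |A * s - B * (log t * s)| ≤ 5 :=
    calc _ ≤ |A * s| + |B * (log t * s)| := abs_sub _ _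
      _ = |A| * s + |B| * |log t * s| := by rw [abs_mul, abs_mul, abs_of_nonneg hs]
      _ ≤ 1 * 1 + 1 * 4 := by gcongr
      _ = 5 := by norm_num
  set X := A * s - B * (log t * s)
  have hX : ((A - B * log t) / 2 - B) * s ^ 2 - 3/4 * s ^ 3
      = X / 2 * s - B * s ^ 2 - 3/4 * s ^ 3 := by
    ring
  have hs2 : s ^ 2 ≤ s := pow_le_of_le_one hs hs1 two_ne_zero
  have hs3 : s ^ 3 ≤ s := pow_le_of_le_one hs hs1 three_ne_zero
  rw [hX, abs_le]
  constructor <;> nlinarith [abs_le.1 hEs, abs_le.1 hB, pow_nonneg hs 2, pow_nonneg hs 3]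

lemma mul_abs_deriv_profile_le {A B M : ℝ} (hA : |A| ≤ 1) (hB : |B| ≤ 1) (hM : 0 ≤ M)
    (ht : 0 < t) (ht1 : t ≤ 1) (htM : (68 * M) ^ 2 * t ≤ 1) :
    M * |deriv (profile A B) t| ≤ -deriv (deriv (profile A B)) t - 1/4 / t ^ 2 * profile A B t := by
  have h3 := rpow_quarter_pow ht.le 3
  have h4 := rpow_quarter_pow ht.le 4
  norm_num at h3 h4
  rw [profile_euler A B ht, ← h3]
  set s := t ^ (1/4 : ℝ)
  have hs : 0 < s := rpow_pos_of_pos ht _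
  have hMs : 68 * M * s ^ 2 ≤ 1 := by
    rw [← h4] at htM
    exact (pow_le_one_iff_of_nonneg (by positivity) two_ne_zero).1 (by linear_combination htM)
  calc M * |deriv (profile A B) t| ≤ M * (17/4 * s / t) := by
        gcongr; exact abs_deriv_profile_le hA hB ht ht1
    _ = 68 * M * s ^ 2 * (s ^ 3 / (16 * t ^ 2)) := by rw [← h4]; field_simp; ring
    _ ≤ 1 * (s ^ 3 / (16 * t ^ 2)) := by gcongr
    _ = s ^ 3 / (16 * t ^ 2) := one_mul _

lemma profile_one_zero_le (ht : 0 ≤ t) : profile 1 0 t ≤ t ^ (1/2 : ℝ) := by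
  simp only [profile, zero_mul, sub_zero, one_mul, sub_le_self_iff]
  exact rpow_nonneg ht _

lemma profile_one_zero_pos (ht : 0 < t) (ht1 : t < 1) : 0 < profile 1 0 t := by
  have h2 := rpow_quarter_pow ht.le 2
  have h3 := rpow_quarter_pow ht.le 3
  norm_num at h2 h3
  have hs : 0 < t ^ (1/4 : ℝ) := rpow_pos_of_pos ht _
  have hs1 : t ^ (1/4 : ℝ) < 1 := rpow_lt_one ht.le ht1 (by norm_num)
  simp only [profile, zero_mul, sub_zero, one_mul, ← h2, ← h3]
  nlinarith [mul_pos (pow_pos hs 2) (sub_pos.2 hs1)]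

lemma rpow_mul_log_inv_pos (ht : 0 < t) (ht1 : t < 1) : 0 < t ^ (1/2 : ℝ) * log (1 / t) :=
  mul_pos (rpow_pos_of_pos ht _) (log_pos (one_lt_one_div ht ht1))

lemma rpow_mul_log_inv_le_two_mul_profile_zero_one (ht : 0 < t) (ht2 : t ≤ exp (-2)) :
    t ^ (1/2 : ℝ) * log (1 / t) ≤ 2 * profile 0 1 t := by
  have h2 := rpow_quarter_pow ht.le 2
  have h3 := rpow_quarter_pow ht.le 3
  norm_num at h2 h3
  have hs : 0 < t ^ (1/4 : ℝ) := rpow_pos_of_pos ht _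
  have hs1 : t ^ (1/4 : ℝ) ≤ 1 :=
    rpow_le_one ht.le (ht2.trans (exp_le_one_iff.2 (by norm_num))) (by norm_num)
  have hL : 2 ≤ log (1 / t) := by
    rw [one_div, log_inv, le_neg]
    simpa using log_le_log ht ht2
  have hprofile : profile 0 1 t = log (1 / t) * (t ^ (1/4 : ℝ)) ^ 2 - (t ^ (1/4 : ℝ)) ^ 3 := by
    rw [profile, one_div t, log_inv, h2, h3]
    ring
  rw [hprofile, ← h2]
  nlinarith [mul_nonneg (pow_nonneg hs.le 2) (by linarith : 0 ≤ log (1 / t) / 2 - t ^ (1/4 : ℝ))]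

lemma profile_zero_one_pos (ht : 0 < t) (ht2 : t ≤ exp (-2)) : 0 < profile 0 1 t := by
  have ht1 : t < 1 := ht2.trans_lt (exp_lt_one_iff.2 (by norm_num))
  linarith [rpow_mul_log_inv_pos ht ht1, rpow_mul_log_inv_le_two_mul_profile_zero_one ht ht2]

end Profile

section Radial

variable {N : ℕ} {Ω : Set (EuclideanSpace ℝ (Fin N))}

lemma posSuperHarmOn_comp_bdist {μ ρ₀ σ M : ℝ} {φ : ℝ → ℝ} (hΩ : IsOpen Ω)
    (hΩc : Ωᶜ.Nonempty) (hδ : ContDiffOn ℝ 2 (bdist Ω) (collar Ω ρ₀))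
    (hgrad : ∀ x ∈ collar Ω ρ₀, ‖gradient (bdist Ω) x‖ = 1)
    (hlap : ∀ x ∈ collar Ω ρ₀, |lap (bdist Ω) x| ≤ M) (hσ : σ ≤ ρ₀)
    (hφ : ∀ t ∈ Ioo 0 σ, ContDiffAt ℝ 2 φ t) (hφpos : ∀ t ∈ Ioo 0 σ, 0 < φ t)
    (hφsuper : ∀ t ∈ Ioo 0 σ, M * |deriv φ t| ≤ -deriv (deriv φ) t - μ / t ^ 2 * φ t) :
    PosSuperHarmOn Ω μ σ (fun x => φ (bdist Ω x)) := by
  have hmem : ∀ x ∈ collar Ω σ, bdist Ω x ∈ Ioo 0 σ := fun _ hx =>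
    bdist_mem_Ioo_of_mem_collar hΩ hΩc hx
  have hδx : ∀ x ∈ collar Ω σ, ContDiffAt ℝ 2 (bdist Ω) x := fun x hx =>
    hδ.contDiffAt ((isOpen_collar hΩ ρ₀).mem_nhds (collar_subset_collar hσ hx))
  refine ⟨⟨fun x hx => ((hφ _ (hmem x hx)).comp x (hδx x hx)).contDiffWithinAt, fun x hx => ?_⟩,
    fun x hx => hφpos _ (hmem x hx)⟩
  have hx₀ := collar_subset_collar hσ hx
  have hcross : deriv φ (bdist Ω x) * lap (bdist Ω) x ≤ M * |deriv φ (bdist Ω x)| :=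
    calc _ ≤ |deriv φ (bdist Ω x)| * |lap (bdist Ω) x| := by rw [← abs_mul]; exact le_abs_self _
      _ ≤ |deriv φ (bdist Ω x)| * M := by gcongr; exact hlap x hx₀
      _ = M * |deriv φ (bdist Ω x)| := mul_comm _ _
  rw [lap_comp (hδx x hx) (hφ _ (hmem x hx)), hgrad x hx₀]
  linarith [hφsuper _ (hmem x hx)]

end Radial

section Comparison

variable {N : ℕ} {Ω : Set (EuclideanSpace ℝ (Fin N))} {μ ρ σ : ℝ}
  {h g : EuclideanSpace ℝ (Fin N) → ℝ}

lemma SmallSubHarm.exists_div_le {u : EuclideanSpace ℝ (Fin N) → ℝ}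
    (hu : SmallSubHarm Ω μ u ρ) (hσ : 0 < σ) (hh : PosSuperHarmOn Ω μ σ h)
    (hhg : ∀ x ∈ collar Ω σ, h x ≤ g x) :
    ∃ C : ℝ, ∃ τ, 0 < τ ∧ τ ≤ ρ ∧ ∀ x ∈ collar Ω τ, u x / g x ≤ C := by
  obtain ⟨C, τ, hτ, hτρσ, hC⟩ := hu σ hσ h hh
  refine ⟨max C 0, τ, hτ, hτρσ.trans (min_le_left _ _), fun x hx => ?_⟩
  have hxσ := collar_subset_collar (hτρσ.trans (min_le_right _ _)) hx
  have hhx := hh.2 x hxσ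
  rw [div_le_iff₀ (hhx.trans_le (hhg x hxσ))]
  calc u x ≤ C * h x := (div_le_iff₀ hhx).1 (hC x hx)
    _ ≤ max C 0 * h x := by gcongr; exact le_max_left C 0
    _ ≤ max C 0 * g x := by gcongr; exact hhg x hxσ

lemma LargeSubHarm.exists_le_div {U : EuclideanSpace ℝ (Fin N) → ℝ} {k : ℝ}
    (hU : LargeSubHarm Ω μ U ρ) (hσ : 0 < σ) (hh : PosSuperHarmOn Ω μ σ h) (hk : 0 < k)
    (hg : ∀ x ∈ collar Ω σ, 0 < g x) (hgh : ∀ x ∈ collar Ω σ, g x ≤ k * h x) :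
    ∃ c, 0 < c ∧ ∀ τ, 0 < τ → τ ≤ ρ → ∃ x ∈ collar Ω τ, c ≤ U x / g x := by
  obtain ⟨c, hc, hcU⟩ := hU σ hσ h hh
  refine ⟨c / k, div_pos hc hk, fun τ hτ hτρ => ?_⟩
  obtain ⟨x, hx, hcx⟩ := hcU (min τ σ) (lt_min hτ hσ) (min_le_min hτρ le_rfl)
  have hxσ := collar_subset_collar (min_le_right _ _) hx
  refine ⟨x, collar_subset_collar (min_le_left _ _) hx, ?_⟩
  rw [le_div_iff₀ (hg x hxσ)]
  calc c / k * g x ≤ c / k * (k * h x) := by gcongr; exact hgh x hxσ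
    _ = c * h x := by field_simp
    _ ≤ U x := (le_div_iff₀ (hh.2 x hxσ)).1 hcx

end Comparison

lemma GoodCollar.exists_posSuperHarmOn_profile {N : ℕ} {Ω : Set (EuclideanSpace ℝ (Fin N))}
    {ρ₀ : ℝ} (hΩ : IsOpen Ω) (hΩc : Ωᶜ.Nonempty) (hρ₀ : GoodCollar Ω ρ₀) :
    ∃ σ, 0 < σ ∧ σ ≤ exp (-2) ∧
      PosSuperHarmOn Ω (1 / 4) σ (fun x => profile 1 0 (bdist Ω x)) ∧
      PosSuperHarmOn Ω (1 / 4) σ (fun x => profile 0 1 (bdist Ω x)) := by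
  obtain ⟨hρ₀, hδ, hgrad, M, hM⟩ := hρ₀
  set K := max M 0
  set σ := min ρ₀ (min (exp (-2)) (1 + (68 * K) ^ 2)⁻¹)
  have hσt : ∀ t ∈ Ioo 0 σ, t ≤ exp (-2) ∧ t < 1 ∧ (68 * K) ^ 2 * t ≤ 1 := fun t ht => by
    have htexp : t ≤ exp (-2) := ht.2.le.trans ((min_le_right _ _).trans (min_le_left _ _))
    have htK : t * (1 + (68 * K) ^ 2) < 1 := by
      rw [← lt_div_iff₀ (by positivity), one_div]
      exact ht.2.trans_le ((min_le_right _ _).trans (min_le_right _ _))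
    exact ⟨htexp, htexp.trans_lt (exp_lt_one_iff.2 (by norm_num)), by nlinarith [ht.1]⟩
  have hsuper : ∀ A B, |A| ≤ 1 → |B| ≤ 1 → (∀ t ∈ Ioo 0 σ, 0 < profile A B t) →
      PosSuperHarmOn Ω (1 / 4) σ (fun x => profile A B (bdist Ω x)) := fun A B hA hB hpos =>
    posSuperHarmOn_comp_bdist hΩ hΩc hδ hgrad (fun x hx => (hM x hx).trans (le_max_left M 0))
      (min_le_left _ _) (fun t ht => contDiffAt_profile A B ht.1) hpos fun t ht =>
      mul_abs_deriv_profile_le hA hB (le_max_right M 0) ht.1 (hσt t ht).2.1.le (hσt t ht).2.2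
  exact ⟨σ, by positivity, (min_le_right _ _).trans (min_le_left _ _),
    hsuper 1 0 (by simp) (by simp) fun t ht => profile_one_zero_pos ht.1 (hσt t ht).2.1,
    hsuper 0 1 (by simp) (by simp) fun t ht => profile_zero_one_pos ht.1 (hσt t ht).1⟩

theorem stmt8_general {N : ℕ} (hN : 2 ≤ N) (Ω : Set (EuclideanSpace ℝ (Fin N)))
    (hΩo : IsOpen Ω) (hΩb : Bornology.IsBounded Ω)
    (ρ₀ : ℝ) (hρ₀ : GoodCollar Ω ρ₀) :
    (∀ u : EuclideanSpace ℝ (Fin N) → ℝ, ∀ ρ, 0 < ρ →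
      SubHarm Ω (1 / 4) (collar Ω ρ) u → SmallSubHarm Ω (1 / 4) u ρ →
      ∃ C : ℝ, ∃ τ, 0 < τ ∧ τ ≤ ρ ∧
        ∀ x ∈ collar Ω τ, u x / bdist Ω x ^ (1 / 2 : ℝ) ≤ C) ∧
    (∀ U : EuclideanSpace ℝ (Fin N) → ℝ, ∀ ρ, 0 < ρ →
      SubHarm Ω (1 / 4) (collar Ω ρ) U → LargeSubHarm Ω (1 / 4) U ρ →
      ∃ c, 0 < c ∧ ∀ τ, 0 < τ → τ ≤ ρ →
        ∃ x ∈ collar Ω τ,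
          c ≤ U x / (bdist Ω x ^ (1 / 2 : ℝ) * Real.log (1 / bdist Ω x))) := by
  have : Nonempty (Fin N) := ⟨⟨0, by omega⟩⟩
  have hΩc : Ωᶜ.Nonempty := hΩb.nonempty_compl
  obtain ⟨σ, hσ, hσe, hsmall, hlarge⟩ := hρ₀.exists_posSuperHarmOn_profile hΩo hΩc
  have hbdist : ∀ x ∈ collar Ω σ, bdist Ω x ∈ Ioo 0 σ := fun _ hx =>
    bdist_mem_Ioo_of_mem_collar hΩo hΩc hx
  have hbdist_le : ∀ x ∈ collar Ω σ, bdist Ω x ≤ exp (-2) := fun x hx =>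
    (hbdist x hx).2.le.trans hσe
  refine ⟨fun u ρ _ _ hu => hu.exists_div_le hσ hsmall fun x hx =>
      profile_one_zero_le (hbdist x hx).1.le,
    fun U ρ _ _ hU => hU.exists_le_div hσ hlarge two_pos (fun x hx => ?_) fun x hx =>
      rpow_mul_log_inv_le_two_mul_profile_zero_one (hbdist x hx).1 (hbdist_le x hx)⟩
  exact rpow_mul_log_inv_pos (hbdist x hx).1
    ((hbdist_le x hx).trans_lt (exp_lt_one_iff.2 (by norm_num)))

/-- Let `μ = 1/4`. (a) A small local sub-harmonic `u` of `L_{1/4}`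
satisfies `limsup_{δ(x)→0} u(x)/δ(x)^{1/2} < ∞`. (b) A large local sub-harmonic `U` of
`L_{1/4}` satisfies `limsup_{δ(x)→0} U(x)/(δ(x)^{1/2}·log(1/δ(x))) > 0`. -/
theorem stmt8 {N : ℕ} (hN : 2 ≤ N) (Ω : Set (EuclideanSpace ℝ (Fin N)))
    (hΩo : IsOpen Ω) (hΩne : Ω.Nonempty) (hΩb : Bornology.IsBounded Ω)
    (ρ₀ : ℝ) (hρ₀ : GoodCollar Ω ρ₀) :
    (∀ u : EuclideanSpace ℝ (Fin N) → ℝ, ∀ ρ, 0 < ρ →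
      SubHarm Ω (1 / 4) (collar Ω ρ) u → SmallSubHarm Ω (1 / 4) u ρ →
      ∃ C : ℝ, ∃ τ, 0 < τ ∧ τ ≤ ρ ∧
        ∀ x ∈ collar Ω τ, u x / bdist Ω x ^ (1 / 2 : ℝ) ≤ C) ∧
    (∀ U : EuclideanSpace ℝ (Fin N) → ℝ, ∀ ρ, 0 < ρ →
      SubHarm Ω (1 / 4) (collar Ω ρ) U → LargeSubHarm Ω (1 / 4) U ρ →
      ∃ c, 0 < c ∧ ∀ τ, 0 < τ → τ ≤ ρ →
        ∃ x ∈ collar Ω τ,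
          c ≤ U x / (bdist Ω x ^ (1 / 2 : ℝ) * Real.log (1 / bdist Ω x))) :=
  stmt8_general hN Ω hΩo hΩb ρ₀ hρ₀
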